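/- arXiv:2604.10244 — 2 statements merged into one kernel-verified Lean document; each statement's English description precedes it below -/
import Mathlib

section
/- Let r > 0, p ≥ 1, and let ρ be a probability measure on (-∞,0] with δ_{pr}(ρ) = ∫_{-∞}^0 e^{-prθ} ρ(dθ) < ∞. Let X : ℝ → ℝ^d be continuous with X restricted to (-∞,0] having ‖X_0‖_r := sup_{θ≤0} e^{rθ}|X(θ)| < ∞. Then for any t > 0, ∫_0^t ∫_{-∞}^0 e^{prs} |X(s+θ)|^p ρ(dθ) ds ≤ δ_{pr}(ρ) ‖X_0‖_r^p · t + δ_{pr}(ρ) ∫_0^t e^{prs}|X(s)|^p ds. -/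
open Real MeasureTheory

theorem stmt_9 (d : ℕ) (r p t : ℝ) (hr : 0 < r) (hp : 1 ≤ p) (ht : 0 < t)
    (ρ : Measure (Set.Iic (0 : ℝ))) [IsProbabilityMeasure ρ]
    (hδ : Integrable (fun θ : Set.Iic (0 : ℝ) => Real.exp (-(p * r) * θ.1)) ρ)
    (X : ℝ → EuclideanSpace ℝ (Fin d)) (hX : Continuous X)
    (hXb : BddAbove (Set.range fun θ : Set.Iic (0 : ℝ) => Real.exp (r * θ.1) * ‖X θ.1‖)) :
    (∫ s in (0 : ℝ)..t, ∫ θ, Real.exp (p * r * s) * ‖X (s + θ.1)‖ ^ p ∂ρ) ≤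
      (∫ θ, Real.exp (-(p * r) * θ.1) ∂ρ) *
          (⨆ θ : Set.Iic (0 : ℝ), Real.exp (r * θ.1) * ‖X θ.1‖) ^ p * t +
        (∫ θ, Real.exp (-(p * r) * θ.1) ∂ρ) *
          ∫ s in (0 : ℝ)..t, Real.exp (p * r * s) * ‖X s‖ ^ p := by
  have hp0 : (0:ℝ) ≤ p := by linarith
  set M : ℝ := ⨆ θ : Set.Iic (0 : ℝ), Real.exp (r * θ.1) * ‖X θ.1‖ with hM
  have hMnn : 0 ≤ M := by
    have h1 : Real.exp (r * (0:ℝ)) * ‖X 0‖ ≤ M :=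
      le_ciSup hXb (⟨0, Set.self_mem_Iic⟩ : Set.Iic (0:ℝ))
    have h0 : 0 ≤ Real.exp (r * (0:ℝ)) * ‖X 0‖ := by positivity
    linarith
  set h : ℝ → ℝ := fun u => Real.exp (p * r * u) * ‖X u‖ ^ p with hh
  have hhc : Continuous h := by
    apply Continuous.mul (by continuity)
    exact hX.norm.rpow_const fun x => Or.inr hp0
  have hhnn : ∀ u, 0 ≤ h u := fun u => by positivity
  have hbound : ∀ u ≤ (0:ℝ), h u ≤ M ^ p := by
    intro u hu
    have h1 : Real.exp (r * u) * ‖X u‖ ≤ M := le_ciSup hXb ⟨u, hu⟩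
    have h2 : h u = (Real.exp (r*u) * ‖X u‖) ^ p := by
      rw [Real.mul_rpow (Real.exp_nonneg _) (norm_nonneg _), ← Real.exp_mul]
      simp only [hh]
      ring_nf
    rw [h2]
    exact Real.rpow_le_rpow (by positivity) h1 hp0
  set I : ℝ := ∫ s in (0:ℝ)..t, h s with hI
  have hInn : 0 ≤ I := intervalIntegral.integral_nonneg ht.le fun u _ => hhnn u
  have hint : ∀ a b : ℝ, IntervalIntegrable h volume a b := fun a b =>
    hhc.intervalIntegrable a b
  -- key pointwise-in-θ estimate
  have key : ∀ θ : ℝ, θ ≤ 0 →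
      (∫ s in (0:ℝ)..t, Real.exp (p * r * s) * ‖X (s + θ)‖ ^ p) ≤
        Real.exp (-(p*r)*θ) * (M ^ p * t + I) := by
    intro θ hθ
    have e1 : (∫ s in (0:ℝ)..t, Real.exp (p * r * s) * ‖X (s + θ)‖ ^ p)
        = Real.exp (-(p*r)*θ) * ∫ s in (0:ℝ)..t, h (s + θ) := by
      rw [← intervalIntegral.integral_const_mul]
      apply intervalIntegral.integral_congr
      intro s _
      simp only [hh]
      rw [← mul_assoc, ← Real.exp_add]
      ring_nf
    have e2 : (∫ s in (0:ℝ)..t, h (s + θ)) = ∫ u in θ..(t+θ), h u := by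
      simpa using intervalIntegral.integral_comp_add_right h θ
    rw [e1, e2]
    have hstep : (∫ u in θ..(t+θ), h u) ≤ M ^ p * t + I := by
      by_cases hc : t + θ ≤ 0
      · have hmono : (∫ u in θ..(t+θ), h u) ≤ ∫ u in θ..(t+θ), (fun _ => M ^ p) u := by
          apply intervalIntegral.integral_mono_on (by linarith) (hint _ _)
            intervalIntegrable_const
          intro u hu
          exact hbound u (le_trans hu.2 hc)
        rw [intervalIntegral.integral_const, smul_eq_mul] at hmono
        nlinarith [Real.rpow_nonneg hMnn p]
      · push_neg at hc
        have split : (∫ u in θ..(t+θ), h u)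
            = (∫ u in θ..(0:ℝ), h u) + ∫ u in (0:ℝ)..(t+θ), h u :=
          (intervalIntegral.integral_add_adjacent_intervals (hint _ _) (hint _ _)).symm
        have b1 : (∫ u in θ..(0:ℝ), h u) ≤ M ^ p * t := by
          have hmono : (∫ u in θ..(0:ℝ), h u) ≤ ∫ u in θ..(0:ℝ), (fun _ => M ^ p) u := by
            apply intervalIntegral.integral_mono_on hθ (hint _ _) intervalIntegrable_const
            intro u hu; exact hbound u hu.2
          rw [intervalIntegral.integral_const, smul_eq_mul] at hmono
          nlinarith [Real.rpow_nonneg hMnn p]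
        have b2 : (∫ u in (0:ℝ)..(t+θ), h u) ≤ I := by
          have splitI : I = (∫ u in (0:ℝ)..(t+θ), h u) + ∫ u in (t+θ)..t, h u :=
            (intervalIntegral.integral_add_adjacent_intervals (hint _ _) (hint _ _)).symm
          have hnn : 0 ≤ ∫ u in (t+θ)..t, h u :=
            intervalIntegral.integral_nonneg (by linarith) fun u _ => hhnn u
          linarith
        linarith
    exact mul_le_mul_of_nonneg_left hstep (Real.exp_nonneg _)
  -- measure-theoretic part
  set F : ℝ → Set.Iic (0:ℝ) → ℝ := fun s θ => Real.exp (p*r*s) * ‖X (s + θ.1)‖ ^ p with hF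
  have hFc : Continuous (Function.uncurry F) := by
    apply Continuous.mul
    · exact (Real.continuous_exp.comp (by continuity))
    · apply Continuous.rpow_const
      · apply hX.norm.comp
        exact continuous_fst.add (continuous_subtype_val.comp continuous_snd)
      · exact fun x => Or.inr hp0
  have hFnn : ∀ s θ, 0 ≤ F s θ := fun s θ => by positivity
  set L : ℝ → ENNReal := fun s => ∫⁻ θ, ENNReal.ofReal (F s θ) ∂ρ with hL
  have hFmeas : Measurable (Function.uncurry fun s θ => ENNReal.ofReal (F s θ)) := by
    exact ENNReal.measurable_ofReal.comp hFc.measurable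
  have hLmeas : Measurable L := Measurable.lintegral_prod_right hFmeas
  have hG : ∀ s, (∫ θ, F s θ ∂ρ) = (L s).toReal := by
    intro s
    apply integral_eq_lintegral_of_nonneg_ae (ae_of_all _ (hFnn s))
    have : Continuous fun θ : Set.Iic (0:ℝ) => F s θ := by
      simp only [hF]
      exact continuous_const.mul
        ((hX.comp (continuous_const.add continuous_subtype_val)).norm.rpow_const
          fun x => Or.inr hp0)
    exact this.aestronglyMeasurable
  have perθ : ∀ θ : Set.Iic (0:ℝ),
      (∫⁻ s in Set.Ioc (0:ℝ) t, ENNReal.ofReal (F s θ)) ≤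
        ENNReal.ofReal (Real.exp (-(p*r)*θ.1) * (M^p*t + I)) := by
    intro θ
    have hcont : Continuous fun s => F s θ := by
      simp only [hF]
      exact (Real.continuous_exp.comp (continuous_const.mul continuous_id)).mul
        ((hX.comp (continuous_id.add continuous_const)).norm.rpow_const fun x => Or.inr hp0)
    have hintF : IntegrableOn (fun s => F s θ) (Set.Ioc 0 t) volume :=
      hcont.integrableOn_Ioc
    rw [← ofReal_integral_eq_lintegral_ofReal hintF (ae_of_all _ fun s => hFnn s θ)]
    apply ENNReal.ofReal_le_ofReal
    have hk := key θ.1 θ.2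
    rwa [intervalIntegral.integral_of_le ht.le] at hk
  set δ : ℝ := ∫ θ, Real.exp (-(p * r) * θ.1) ∂ρ with hδ'
  have hδnn : 0 ≤ δ := integral_nonneg fun θ => (Real.exp_nonneg _)
  have chain : (∫⁻ s in Set.Ioc (0:ℝ) t, ENNReal.ofReal ((L s).toReal)) ≤
      ENNReal.ofReal (δ * (M^p*t + I)) := by
    calc (∫⁻ s in Set.Ioc (0:ℝ) t, ENNReal.ofReal ((L s).toReal))
        ≤ ∫⁻ s in Set.Ioc (0:ℝ) t, L s := lintegral_mono fun s => ENNReal.ofReal_toReal_le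
      _ = ∫⁻ θ, (∫⁻ s in Set.Ioc (0:ℝ) t, ENNReal.ofReal (F s θ)) ∂ρ :=
          lintegral_lintegral_swap hFmeas.aemeasurable
      _ ≤ ∫⁻ θ, ENNReal.ofReal (Real.exp (-(p*r)*θ.1) * (M^p*t + I)) ∂ρ :=
          lintegral_mono perθ
      _ = ENNReal.ofReal (∫ θ, Real.exp (-(p*r)*θ.1) * (M^p*t + I) ∂ρ) :=
          (ofReal_integral_eq_lintegral_ofReal (hδ.mul_const _)
            (ae_of_all _ fun θ => by positivity)).symm
      _ = ENNReal.ofReal (δ * (M^p*t + I)) := by rw [MeasureTheory.integral_mul_const]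
  have lhs_eq : (∫ s in (0:ℝ)..t, ∫ θ, Real.exp (p * r * s) * ‖X (s + θ.1)‖ ^ p ∂ρ)
      = (∫⁻ s in Set.Ioc (0:ℝ) t, ENNReal.ofReal ((L s).toReal)).toReal := by
    rw [intervalIntegral.integral_of_le ht.le]
    have : ∀ s, (∫ θ, Real.exp (p * r * s) * ‖X (s + θ.1)‖ ^ p ∂ρ) = (L s).toReal := hG
    simp_rw [this]
    apply integral_eq_lintegral_of_nonneg_ae (ae_of_all _ fun s => ENNReal.toReal_nonneg)
    exact hLmeas.ennreal_toReal.aestronglyMeasurable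
  rw [lhs_eq]
  have := ENNReal.toReal_mono ENNReal.ofReal_ne_top chain
  rw [ENNReal.toReal_ofReal (by positivity)] at this
  calc (∫⁻ s in Set.Ioc (0:ℝ) t, ENNReal.ofReal ((L s).toReal)).toReal
      ≤ δ * (M^p*t + I) := this
    _ = δ * M^p * t + δ * I := by ring
end

section
/- Let X, Y : ℝ → ℝ^d be continuous with sup_{θ≤0} e^{rθ}|X(θ)| and sup_{θ≤0}e^{rθ}|Y(θ)| finite, and let G satisfy |G(φ,k)|^p ≤ κ^p ∫_{-∞}^0 |φ(θ)|^p ρ(dθ) with κ₁ := κ δ_{pr}(ρ)^{1/p} ∈ (0,1), where δ_{pr}(ρ) = ∫_{-∞}^0 e^{-prθ}ρ(dθ). Set Y(t) = X(t) - G(X_t, k) (with X_t(θ)=X(t+θ)). Then for any t > 0: sup_{0<u≤t} e^{pru}|X(u)|^p ≤ (κ₁/(1-κ₁)) ‖X_0‖_r^p + (1/(1-κ₁)^p) sup_{0<u≤t} e^{pru}|Y(u)|^p. -/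
open Real MeasureTheory

lemma young_aux (a b ε p : ℝ) (ha : 0 ≤ a) (hb : 0 ≤ b) (hε0 : 0 < ε) (hε1 : ε < 1)
    (hp : 1 ≤ p) :
    (a + b) ^ p ≤ (1 - ε) * (a ^ p / (1 - ε) ^ p) + ε * (b ^ p / ε ^ p) := by
  have h1ε : 0 < 1 - ε := by linarith
  have hc := (convexOn_rpow hp).2 (Set.mem_Ici.2 (div_nonneg ha h1ε.le))
    (Set.mem_Ici.2 (div_nonneg hb hε0.le)) h1ε.le hε0.le (by ring)
  simp only [smul_eq_mul] at hc
  have heq : (1 - ε) * (a / (1 - ε)) + ε * (b / ε) = a + b := by field_simp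
  rw [heq, div_rpow ha h1ε.le, div_rpow hb hε0.le] at hc
  exact hc

theorem stmt_15 (d : ℕ) (r p κ κ₁ t : ℝ) (hr : 0 < r) (hp : 1 ≤ p) (hκ : 0 < κ) (ht : 0 < t)
    (ρ : Measure (Set.Iic (0 : ℝ))) [IsProbabilityMeasure ρ]
    (hδ : Integrable (fun θ : Set.Iic (0 : ℝ) => Real.exp (-(p * r) * θ.1)) ρ)
    (hκ₁def : κ₁ = κ * (∫ θ, Real.exp (-(p * r) * θ.1) ∂ρ) ^ ((1 : ℝ) / p))
    (hκ₁ : κ₁ ∈ Set.Ioo (0 : ℝ) 1)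
    (X Y : ℝ → EuclideanSpace ℝ (Fin d)) (hX : Continuous X)
    (hXb : BddAbove (Set.range fun θ : Set.Iic (0 : ℝ) => Real.exp (r * θ.1) * ‖X θ.1‖))
    (G : (Set.Iic (0 : ℝ) → EuclideanSpace ℝ (Fin d)) → EuclideanSpace ℝ (Fin d))
    (hG : ∀ φ : Set.Iic (0 : ℝ) → EuclideanSpace ℝ (Fin d),
      ‖G φ‖ ^ p ≤ κ ^ p * ∫ θ, ‖φ θ‖ ^ p ∂ρ)
    (hY : ∀ u : ℝ, Y u = X u - G fun θ : Set.Iic (0 : ℝ) => X (u + θ.1)) :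
    (⨆ u : Set.Ioc (0 : ℝ) t, Real.exp (p * r * u.1) * ‖X u.1‖ ^ p) ≤
      (κ₁ / (1 - κ₁)) *
          (⨆ θ : Set.Iic (0 : ℝ), Real.exp (r * θ.1) * ‖X θ.1‖) ^ p +
        (1 / (1 - κ₁) ^ p) *
          ⨆ u : Set.Ioc (0 : ℝ) t, Real.exp (p * r * u.1) * ‖Y u.1‖ ^ p := by
  obtain ⟨hκ₁0, hκ₁1⟩ := hκ₁
  have hp0 : (0 : ℝ) < p := lt_of_lt_of_le one_pos hp
  have hpr : 0 < p * r := mul_pos hp0 hr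
  have h1κ : 0 < 1 - κ₁ := by linarith
  haveI : Nonempty (Set.Ioc (0 : ℝ) t) := ⟨⟨t, ht, le_rfl⟩⟩
  -- helper: (exp (r*s) * z)^p = exp (p*r*s) * z^p
  have pow_eq : ∀ (s z : ℝ), 0 ≤ z → (Real.exp (r * s) * z) ^ p = Real.exp (p * r * s) * z ^ p := by
    intro s z hz
    rw [mul_rpow (Real.exp_pos _).le hz, ← Real.exp_mul, show r * s * p = p * r * s from by ring]
  -- helper: x^p ≤ c → x ≤ c^(1/p)
  have root_le : ∀ x c : ℝ, 0 ≤ x → x ^ p ≤ c → x ≤ c ^ ((1:ℝ) / p) := by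
    intro x c hx hxc
    have h := Real.rpow_le_rpow (Real.rpow_nonneg hx p) hxc (by positivity : (0:ℝ) ≤ 1 / p)
    rwa [← Real.rpow_mul hx, mul_one_div_cancel hp0.ne', Real.rpow_one] at h
  set M := ⨆ θ : Set.Iic (0 : ℝ), Real.exp (r * θ.1) * ‖X θ.1‖ with hMdef
  have hMub : ∀ s : ℝ, s ≤ 0 → Real.exp (r * s) * ‖X s‖ ≤ M := fun s hs =>
    le_ciSup hXb (⟨s, hs⟩ : Set.Iic (0 : ℝ))
  have hM0 : 0 ≤ M := le_trans (by positivity) (hMub 0 le_rfl)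
  -- the X-sup
  set S := ⨆ u : Set.Ioc (0 : ℝ) t, Real.exp (p * r * u.1) * ‖X u.1‖ ^ p with hSdef
  obtain ⟨C, hC⟩ := (isCompact_Icc : IsCompact (Set.Icc (0:ℝ) t)).exists_bound_of_continuousOn
    hX.continuousOn
  have hSb : BddAbove (Set.range fun u : Set.Ioc (0 : ℝ) t =>
      Real.exp (p * r * u.1) * ‖X u.1‖ ^ p) := by
    refine ⟨Real.exp (p * r * t) * C ^ p, ?_⟩
    rintro _ ⟨u, rfl⟩
    have hu := u.2
    have h1 : Real.exp (p * r * u.1) ≤ Real.exp (p * r * t) :=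
      Real.exp_le_exp.2 (mul_le_mul_of_nonneg_left hu.2 hpr.le)
    have h2 : ‖X u.1‖ ^ p ≤ C ^ p :=
      Real.rpow_le_rpow (norm_nonneg _) (hC u.1 ⟨hu.1.le, hu.2⟩) hp0.le
    exact mul_le_mul h1 h2 (Real.rpow_nonneg (norm_nonneg _) p) (Real.exp_pos _).le
  have hS : ∀ u : ℝ, u ∈ Set.Ioc (0:ℝ) t → Real.exp (p * r * u) * ‖X u‖ ^ p ≤ S := fun u hu =>
    le_ciSup hSb (⟨u, hu⟩ : Set.Ioc (0:ℝ) t)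
  have hS0 : 0 ≤ S := le_trans (by positivity) (hS t ⟨ht, le_rfl⟩)
  set N := max (M ^ p) S with hNdef
  have hN0 : 0 ≤ N := le_max_of_le_right hS0
  have key : ∀ s : ℝ, s ≤ t → Real.exp (p * r * s) * ‖X s‖ ^ p ≤ N := by
    intro s hst
    rcases le_or_gt s 0 with h | h
    · have h2 : (Real.exp (r * s) * ‖X s‖) ^ p ≤ M ^ p :=
        Real.rpow_le_rpow (by positivity) (hMub s h) hp0.le
      rw [pow_eq s _ (norm_nonneg _)] at h2
      exact h2.trans (le_max_left _ _)
    · exact (hS s ⟨h, hst⟩).trans (le_max_right _ _)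
  -- δ and κ₁^p
  set δ := ∫ θ, Real.exp (-(p * r) * θ.1) ∂ρ with hδdef
  have hδ0 : 0 ≤ δ := integral_nonneg fun θ => (Real.exp_pos _).le
  have hκ₁p : κ₁ ^ p = κ ^ p * δ := by
    rw [hκ₁def, mul_rpow hκ.le (Real.rpow_nonneg hδ0 _), ← Real.rpow_mul hδ0,
      one_div_mul_cancel hp0.ne', Real.rpow_one]
  -- bound on G term
  have hGb : ∀ u : ℝ, u ≤ t →
      Real.exp (p * r * u) * ‖G (fun θ : Set.Iic (0:ℝ) => X (u + θ.1))‖ ^ p ≤ κ₁ ^ p * N := by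
    intro u hut
    have hint : (∫ θ, ‖X (u + (θ : Set.Iic (0:ℝ)).1)‖ ^ p ∂ρ) ≤
        (N * Real.exp (-(p * r * u))) * δ := by
      have hmono := integral_mono_of_nonneg
        (f := fun θ : Set.Iic (0:ℝ) => ‖X (u + θ.1)‖ ^ p)
        (g := fun θ : Set.Iic (0:ℝ) => (N * Real.exp (-(p * r * u))) * Real.exp (-(p * r) * θ.1))
        (ae_of_all _ fun θ => Real.rpow_nonneg (norm_nonneg _) p)
        (hδ.const_mul _)
        (ae_of_all _ fun θ => by
          have hθ : (θ.1 : ℝ) ≤ 0 := θ.2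
          have hk := key (u + θ.1) (by linarith)
          have hstep : ‖X (u + θ.1)‖ ^ p ≤ N * Real.exp (-(p * r * (u + θ.1))) := by
            calc ‖X (u + θ.1)‖ ^ p
                = (Real.exp (p * r * (u + θ.1)) * ‖X (u + θ.1)‖ ^ p) *
                    Real.exp (-(p * r * (u + θ.1))) := by
                  rw [mul_comm (Real.exp _), mul_assoc, ← Real.exp_add]; simp
              _ ≤ N * Real.exp (-(p * r * (u + θ.1))) :=
                  mul_le_mul_of_nonneg_right hk (Real.exp_pos _).le
          calc ‖X (u + θ.1)‖ ^ p ≤ N * Real.exp (-(p * r * (u + θ.1))) := hstep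
            _ = (N * Real.exp (-(p * r * u))) * Real.exp (-(p * r) * θ.1) := by
                rw [show -(p * r * (u + θ.1)) = -(p * r * u) + -(p * r) * θ.1 from by ring,
                  Real.exp_add]; ring)
      rwa [integral_const_mul] at hmono
    have h1 := hG (fun θ : Set.Iic (0:ℝ) => X (u + θ.1))
    have h2 : ‖G (fun θ : Set.Iic (0:ℝ) => X (u + θ.1))‖ ^ p ≤
        κ ^ p * ((N * Real.exp (-(p * r * u))) * δ) :=
      h1.trans (mul_le_mul_of_nonneg_left hint (Real.rpow_nonneg hκ.le p))
    calc Real.exp (p * r * u) * ‖G (fun θ : Set.Iic (0:ℝ) => X (u + θ.1))‖ ^ p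
        ≤ Real.exp (p * r * u) * (κ ^ p * ((N * Real.exp (-(p * r * u))) * δ)) :=
          mul_le_mul_of_nonneg_left h2 (Real.exp_pos _).le
      _ = κ₁ ^ p * N := by
          rw [hκ₁p, Real.exp_neg]
          field_simp
  -- the Y-sup
  set T := ⨆ u : Set.Ioc (0 : ℝ) t, Real.exp (p * r * u.1) * ‖Y u.1‖ ^ p with hTdef
  have hYle : ∀ u : ℝ, ‖Y u‖ ≤ ‖X u‖ + ‖G (fun θ : Set.Iic (0:ℝ) => X (u + θ.1))‖ := by
    intro u; rw [hY u]; exact norm_sub_le _ _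
  have hTb : BddAbove (Set.range fun u : Set.Ioc (0 : ℝ) t =>
      Real.exp (p * r * u.1) * ‖Y u.1‖ ^ p) := by
    refine ⟨(N ^ ((1:ℝ)/p) + (κ₁ ^ p * N) ^ ((1:ℝ)/p)) ^ p, ?_⟩
    rintro _ ⟨u, rfl⟩
    have hu := u.2
    have hx : Real.exp (r * u.1) * ‖X u.1‖ ≤ N ^ ((1:ℝ)/p) :=
      root_le _ _ (by positivity) (by rw [pow_eq _ _ (norm_nonneg _)]; exact key u.1 hu.2)
    have hg : Real.exp (r * u.1) * ‖G (fun θ : Set.Iic (0:ℝ) => X (u.1 + θ.1))‖ ≤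
        (κ₁ ^ p * N) ^ ((1:ℝ)/p) :=
      root_le _ _ (by positivity) (by rw [pow_eq _ _ (norm_nonneg _)]; exact hGb u.1 hu.2)
    have h3 : Real.exp (r * u.1) * ‖Y u.1‖ ≤
        N ^ ((1:ℝ)/p) + (κ₁ ^ p * N) ^ ((1:ℝ)/p) := by
      calc Real.exp (r * u.1) * ‖Y u.1‖
          ≤ Real.exp (r * u.1) * (‖X u.1‖ + ‖G (fun θ : Set.Iic (0:ℝ) => X (u.1 + θ.1))‖) :=
            mul_le_mul_of_nonneg_left (hYle u.1) (Real.exp_pos _).le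
        _ = Real.exp (r * u.1) * ‖X u.1‖ +
            Real.exp (r * u.1) * ‖G (fun θ : Set.Iic (0:ℝ) => X (u.1 + θ.1))‖ := by ring
        _ ≤ _ := add_le_add hx hg
    calc Real.exp (p * r * u.1) * ‖Y u.1‖ ^ p
        = (Real.exp (r * u.1) * ‖Y u.1‖) ^ p := (pow_eq _ _ (norm_nonneg _)).symm
      _ ≤ (N ^ ((1:ℝ)/p) + (κ₁ ^ p * N) ^ ((1:ℝ)/p)) ^ p :=
          Real.rpow_le_rpow (by positivity) h3 hp0.le
  have hT : ∀ u : ℝ, u ∈ Set.Ioc (0:ℝ) t → Real.exp (p * r * u) * ‖Y u‖ ^ p ≤ T := fun u hu =>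
    le_ciSup hTb (⟨u, hu⟩ : Set.Ioc (0:ℝ) t)
  -- per-u estimate and conclusion
  have hκ₁pne : (0:ℝ) < κ₁ ^ p := Real.rpow_pos_of_pos hκ₁0 p
  have hmain : S ≤ (1 - κ₁) * (T / (1 - κ₁) ^ p) + κ₁ * N := by
    rw [hSdef]
    apply ciSup_le
    intro u
    have hu := u.2
    set a := Real.exp (r * u.1) * ‖Y u.1‖ with hadef
    set b := Real.exp (r * u.1) * ‖G (fun θ : Set.Iic (0:ℝ) => X (u.1 + θ.1))‖ with hbdef
    have ha0 : 0 ≤ a := by positivity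
    have hb0 : 0 ≤ b := by positivity
    have hab : Real.exp (r * u.1) * ‖X u.1‖ ≤ a + b := by
      have hXeq : ‖X u.1‖ ≤ ‖Y u.1‖ + ‖G (fun θ : Set.Iic (0:ℝ) => X (u.1 + θ.1))‖ := by
        have : X u.1 = Y u.1 + G (fun θ : Set.Iic (0:ℝ) => X (u.1 + θ.1)) := by
          rw [hY u.1]; abel
        rw [this]; exact norm_add_le _ _
      calc Real.exp (r * u.1) * ‖X u.1‖
          ≤ Real.exp (r * u.1) * (‖Y u.1‖ + ‖G (fun θ : Set.Iic (0:ℝ) => X (u.1 + θ.1))‖) :=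
            mul_le_mul_of_nonneg_left hXeq (Real.exp_pos _).le
        _ = a + b := by rw [hadef, hbdef]; ring
    have hap : a ^ p ≤ T := by rw [hadef, pow_eq _ _ (norm_nonneg _)]; exact hT u.1 hu
    have hbp : b ^ p ≤ κ₁ ^ p * N := by
      rw [hbdef, pow_eq _ _ (norm_nonneg _)]; exact hGb u.1 hu.2
    calc Real.exp (p * r * u.1) * ‖X u.1‖ ^ p
        = (Real.exp (r * u.1) * ‖X u.1‖) ^ p := (pow_eq _ _ (norm_nonneg _)).symm
      _ ≤ (a + b) ^ p := Real.rpow_le_rpow (by positivity) hab hp0.le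
      _ ≤ (1 - κ₁) * (a ^ p / (1 - κ₁) ^ p) + κ₁ * (b ^ p / κ₁ ^ p) :=
          young_aux a b κ₁ p ha0 hb0 hκ₁0 hκ₁1 hp
      _ ≤ (1 - κ₁) * (T / (1 - κ₁) ^ p) + κ₁ * ((κ₁ ^ p * N) / κ₁ ^ p) := by
          gcongr
      _ = (1 - κ₁) * (T / (1 - κ₁) ^ p) + κ₁ * N := by
          rw [mul_div_cancel_left₀ _ hκ₁pne.ne']
  have hNadd : N ≤ M ^ p + S :=
    max_le (le_add_of_nonneg_right hS0) (le_add_of_nonneg_left (Real.rpow_nonneg hM0 p))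
  have hfin : S * (1 - κ₁) ≤ κ₁ * M ^ p + (1 - κ₁) * (T / (1 - κ₁) ^ p) := by
    have h5 : S ≤ (1 - κ₁) * (T / (1 - κ₁) ^ p) + κ₁ * (M ^ p + S) :=
      hmain.trans (by gcongr)
    nlinarith [h5]
  have hD : (0:ℝ) < (1 - κ₁) ^ p := Real.rpow_pos_of_pos h1κ p
  have : S ≤ (κ₁ * M ^ p + (1 - κ₁) * (T / (1 - κ₁) ^ p)) / (1 - κ₁) := by
    rw [le_div_iff₀ h1κ]; exact hfin
  refine this.trans (le_of_eq ?_)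
  field_simp
end
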